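/- arXiv:1210.1354 — 2 statements merged into one kernel-verified Lean document; each statement's English description precedes it below -/
import Mathlib

section
/- Let Y_t = L(A_t) be a trawl process with homogeneous Lévy basis L and trawl A of finite Lebesgue measure. Then for s < t the cumulant function of the increment satisfies C(ζ ‡ Y_t − Y_s) = Leb(A_{t−s} \ A_0)·C(ζ ‡ L') + Leb(A_0 \ A_{t−s})·C(−ζ ‡ L'), using the independence of L on the disjoint sets A_t \ A_s and A_s \ A_t and the translation invariance of Lebesgue measure. -/
open MeasureTheory ProbabilityTheory
open scoped Pointwise

/-!
Additivity over the common part `A_t ∩ A_s` gives `Y_t - Y_s = L(A_t \ A_s) - L(A_s \ A_t)` almost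
surely. The two sets are disjoint, so the two terms are independent and the characteristic
function factors as `exp(Leb(A_t \ A_s) C(ζ)) · exp(Leb(A_s \ A_t) C(-ζ))`. Translating back by `s`
in time turns `A_t \ A_s` into `A_{t-s} \ A_0` without changing its Lebesgue measure.
-/

section LevyBasis

variable {α Ω : Type*} [MeasurableSpace α] [MeasurableSpace Ω] {μ : Measure α} {P : Measure Ω}
  {L : Set α → Ω → ℝ}

lemma ae_sub_eq_sub_sdiff
    (hadd : ∀ B₁ B₂ : Set α, MeasurableSet B₁ → MeasurableSet B₂ → μ B₁ < ⊤ → μ B₂ < ⊤ →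
      Disjoint B₁ B₂ → ∀ᵐ ω ∂P, L (B₁ ∪ B₂) ω = L B₁ ω + L B₂ ω)
    {U V : Set α} (hU : MeasurableSet U) (hV : MeasurableSet V) (hUfin : μ U < ⊤)
    (hVfin : μ V < ⊤) :
    ∀ᵐ ω ∂P, L U ω - L V ω = L (U \ V) ω - L (V \ U) ω := by
  have hUV : μ (U ∩ V) < ⊤ := (measure_mono Set.inter_subset_left).trans_lt hUfin
  have hU' := hadd (U \ V) (U ∩ V) (hU.diff hV) (hU.inter hV)
    ((measure_mono Set.sdiff_subset).trans_lt hUfin) hUV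
    (Set.disjoint_sdiff_left.mono_right Set.inter_subset_right)
  have hV' := hadd (V \ U) (U ∩ V) (hV.diff hU) (hU.inter hV)
    ((measure_mono Set.sdiff_subset).trans_lt hVfin) hUV
    (Set.disjoint_sdiff_left.mono_right Set.inter_subset_left)
  rw [Set.sdiff_union_inter] at hU'
  rw [Set.inter_comm, Set.sdiff_union_inter] at hV'
  filter_upwards [hU', hV'] with ω hUω hVω
  rw [hUω, hVω, Set.inter_comm V U]
  ring

lemma integral_exp_mul_sub_of_indepFun {X Y : Ω → ℝ} (hXY : IndepFun X Y P) {ζ : ℝ}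
    (hX : AEStronglyMeasurable (fun ω => Complex.exp (Complex.I * ζ * X ω)) P)
    (hY : AEStronglyMeasurable (fun ω => Complex.exp (Complex.I * (-ζ : ℝ) * Y ω)) P) :
    ∫ ω, Complex.exp (Complex.I * ζ * (X ω - Y ω)) ∂P
      = (∫ ω, Complex.exp (Complex.I * ζ * X ω) ∂P)
        * ∫ ω, Complex.exp (Complex.I * (-ζ : ℝ) * Y ω) ∂P := by
  have hexp : ∀ x y : ℝ, Complex.exp (Complex.I * ζ * (x - y))
      = Complex.exp (Complex.I * ζ * x) * Complex.exp (Complex.I * (-ζ : ℝ) * y) := by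
    intro x y
    rw [← Complex.exp_add]
    push_cast
    ring_nf
  simp_rw [hexp]
  exact (hXY.comp (φ := fun x : ℝ => Complex.exp (Complex.I * ζ * x))
    (ψ := fun y : ℝ => Complex.exp (Complex.I * (-ζ : ℝ) * y)) (by fun_prop) (by fun_prop)
    ).integral_fun_mul_eq_mul_integral hX hY

theorem integral_exp_mul_sub_of_levyBasis {C : ℝ → ℂ}
    (hL : ∀ B : Set α, MeasurableSet B → μ B < ⊤ → ∀ ζ : ℝ,
      ∫ ω, Complex.exp (Complex.I * ζ * (L B ω)) ∂P = Complex.exp ((μ B).toReal * C ζ))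
    (hadd : ∀ B₁ B₂ : Set α, MeasurableSet B₁ → MeasurableSet B₂ → μ B₁ < ⊤ → μ B₂ < ⊤ →
      Disjoint B₁ B₂ → ∀ᵐ ω ∂P, L (B₁ ∪ B₂) ω = L B₁ ω + L B₂ ω)
    (hindep : ∀ B₁ B₂ : Set α, MeasurableSet B₁ → MeasurableSet B₂ → μ B₁ < ⊤ → μ B₂ < ⊤ →
      Disjoint B₁ B₂ → IndepFun (L B₁) (L B₂) P)
    {U V : Set α} (hU : MeasurableSet U) (hV : MeasurableSet V) (hUfin : μ U < ⊤)
    (hVfin : μ V < ⊤) (ζ : ℝ) :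
    ∫ ω, Complex.exp (Complex.I * ζ * (L U ω - L V ω)) ∂P
      = Complex.exp ((μ (U \ V)).toReal * C ζ + (μ (V \ U)).toReal * C (-ζ)) := by
  have hUV : μ (U \ V) < ⊤ := (measure_mono Set.sdiff_subset).trans_lt hUfin
  have hVU : μ (V \ U) < ⊤ := (measure_mono Set.sdiff_subset).trans_lt hVfin
  have hLU := hL _ (hU.diff hV) hUV ζ
  have hLV := hL _ (hV.diff hU) hVU (-ζ)
  have hincr : (fun ω => Complex.exp (Complex.I * ζ * (L U ω - L V ω)))
      =ᵐ[P] fun ω => Complex.exp (Complex.I * ζ * (L (U \ V) ω - L (V \ U) ω)) := by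
    filter_upwards [ae_sub_eq_sub_sdiff hadd hU hV hUfin hVfin] with ω h
    rw [← Complex.ofReal_sub, h, Complex.ofReal_sub]
  -- A non-integrable integrand would have Bochner integral `0`, not a value of `exp`.
  have hmU := (Integrable.of_integral_ne_zero (hLU ▸ Complex.exp_ne_zero _)).aestronglyMeasurable
  have hmV := (Integrable.of_integral_ne_zero (hLV ▸ Complex.exp_ne_zero _)).aestronglyMeasurable
  rw [integral_congr_ae hincr, integral_exp_mul_sub_of_indepFun
      (hindep _ _ (hU.diff hV) (hV.diff hU) hUV hVU disjoint_sdiff_sdiff) hmU hmV,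
    hLU, hLV, Complex.exp_add]

end LevyBasis

section Translation

variable {G : Type*} [AddCommGroup G] [MeasurableSpace G] (μ : Measure G)
  [μ.IsAddLeftInvariant] (a b : G) (A B : Set G)

lemma measure_vadd_sdiff_vadd_left :
    μ ((a +ᵥ A) \ (b +ᵥ B)) = μ (((a - b) +ᵥ A) \ B) := by
  rw [← measure_vadd μ b (((a - b) +ᵥ A) \ B), Set.vadd_set_sdiff, vadd_vadd, add_sub_cancel]

lemma measure_vadd_sdiff_vadd_right :
    μ ((a +ᵥ A) \ (b +ᵥ B)) = μ (A \ ((b - a) +ᵥ B)) := by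
  rw [← measure_vadd μ a (A \ ((b - a) +ᵥ B)), Set.vadd_set_sdiff, vadd_vadd, add_sub_cancel]

end Translation

lemma image_prodMk_add_eq_vadd {E F : Type*} [AddZeroClass E] [AddCommMagma F] (c : F)
    (A : Set (E × F)) : (fun p : E × F => (p.1, p.2 + c)) '' A = ((0 : E), c) +ᵥ A := by
  rw [← Set.image_vadd]
  congr 1
  funext p
  exact Prod.ext (zero_add p.1).symm (add_comm p.2 c)

theorem stmt_8_general {Ω : Type*} [MeasurableSpace Ω] (P : Measure Ω)
    (d : ℕ) (L : Set ((Fin d → ℝ) × ℝ) → Ω → ℝ) (C : ℝ → ℂ)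
    (hL : ∀ B : Set ((Fin d → ℝ) × ℝ), MeasurableSet B → volume B < ⊤ → ∀ ζ : ℝ,
      ∫ ω, Complex.exp (Complex.I * ζ * (L B ω)) ∂P
        = Complex.exp (((volume B).toReal : ℂ) * C ζ))
    (hadd : ∀ B₁ B₂ : Set ((Fin d → ℝ) × ℝ), MeasurableSet B₁ → MeasurableSet B₂ →
      volume B₁ < ⊤ → volume B₂ < ⊤ → Disjoint B₁ B₂ →
      ∀ᵐ ω ∂P, L (B₁ ∪ B₂) ω = L B₁ ω + L B₂ ω)
    (hindep : ∀ B₁ B₂ : Set ((Fin d → ℝ) × ℝ), MeasurableSet B₁ → MeasurableSet B₂ →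
      volume B₁ < ⊤ → volume B₂ < ⊤ → Disjoint B₁ B₂ → IndepFun (L B₁) (L B₂) P)
    (A : Set ((Fin d → ℝ) × ℝ)) (hA : MeasurableSet A) (hAfin : volume A < ⊤)
    (s t ζ : ℝ) :
    ∫ ω, Complex.exp (Complex.I * ζ *
        ((L ((fun p : (Fin d → ℝ) × ℝ => (p.1, p.2 + t)) '' A) ω)
          - (L ((fun p : (Fin d → ℝ) × ℝ => (p.1, p.2 + s)) '' A) ω))) ∂P
      = Complex.exp
          (((volume (((fun p : (Fin d → ℝ) × ℝ => (p.1, p.2 + (t - s))) '' A) \ A)).toReal : ℂ)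
              * C ζ
            + ((volume (A \ ((fun p : (Fin d → ℝ) × ℝ => (p.1, p.2 + (t - s))) '' A))).toReal : ℂ)
              * C (-ζ)) := by
  simp only [image_prodMk_add_eq_vadd]
  have : (volume : Measure ((Fin d → ℝ) × ℝ)).IsAddLeftInvariant := by
    rw [Measure.volume_eq_prod]; infer_instance
  have hshift (c : ℝ) : MeasurableSet (((0 : Fin d → ℝ), c) +ᵥ A) ∧
      volume (((0 : Fin d → ℝ), c) +ᵥ A) < ⊤ :=
    ⟨hA.const_vadd _, by rwa [measure_vadd]⟩
  rw [integral_exp_mul_sub_of_levyBasis hL hadd hindep (hshift t).1 (hshift s).1 (hshift t).2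
      (hshift s).2, measure_vadd_sdiff_vadd_left,
    measure_vadd_sdiff_vadd_right, Prod.mk_sub_mk, sub_self]

/-- For a trawl process `Y_t = L(A_t)` with homogeneous Lévy basis `L` (cumulant
`log E[exp(iζL(B))] = Leb(B)·C(ζ)`, additivity, and independence on disjoint sets),
the characteristic function of the increment satisfies, for `s < t`,
`E[exp(iζ(Y_t − Y_s))] = exp(Leb(A_{t−s} \ A_0)·C(ζ) + Leb(A_0 \ A_{t−s})·C(−ζ))`. -/
theorem stmt_8 {Ω : Type*} [MeasurableSpace Ω] (P : Measure Ω) [IsProbabilityMeasure P]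
    (d : ℕ) (L : Set ((Fin d → ℝ) × ℝ) → Ω → ℝ) (C : ℝ → ℂ)
    (hL : ∀ B : Set ((Fin d → ℝ) × ℝ), MeasurableSet B → volume B < ⊤ → ∀ ζ : ℝ,
      ∫ ω, Complex.exp (Complex.I * ζ * (L B ω)) ∂P
        = Complex.exp (((volume B).toReal : ℂ) * C ζ))
    (hadd : ∀ B₁ B₂ : Set ((Fin d → ℝ) × ℝ), MeasurableSet B₁ → MeasurableSet B₂ →
      volume B₁ < ⊤ → volume B₂ < ⊤ → Disjoint B₁ B₂ →
      ∀ᵐ ω ∂P, L (B₁ ∪ B₂) ω = L B₁ ω + L B₂ ω)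
    (hindep : ∀ B₁ B₂ : Set ((Fin d → ℝ) × ℝ), MeasurableSet B₁ → MeasurableSet B₂ →
      volume B₁ < ⊤ → volume B₂ < ⊤ → Disjoint B₁ B₂ → IndepFun (L B₁) (L B₂) P)
    (A : Set ((Fin d → ℝ) × ℝ)) (hA : MeasurableSet A) (hAfin : volume A < ⊤)
    (s t ζ : ℝ) (hst : s < t) :
    ∫ ω, Complex.exp (Complex.I * ζ *
        ((L ((fun p : (Fin d → ℝ) × ℝ => (p.1, p.2 + t)) '' A) ω)
          - (L ((fun p : (Fin d → ℝ) × ℝ => (p.1, p.2 + s)) '' A) ω))) ∂P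
      = Complex.exp
          (((volume (((fun p : (Fin d → ℝ) × ℝ => (p.1, p.2 + (t - s))) '' A) \ A)).toReal : ℂ)
              * C ζ
            + ((volume (A \ ((fun p : (Fin d → ℝ) × ℝ => (p.1, p.2 + (t - s))) '' A))).toReal : ℂ)
              * C (-ζ)) :=
  stmt_8_general P d L C hL hadd hindep A hA hAfin s t ζ
end

section
/- For any infinitely divisible law π on ℝ there exists a stationary trawl process having π as its one-dimensional marginal law: choose a trawl A with Leb(A) = 1 and a homogeneous Lévy basis L whose Lévy seed has law π; then Y_t = L(A_t) satisfies Y_t ∼ π for every t. -/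
open MeasureTheory ProbabilityTheory Complex

/-! The shifted trawl `A + (0, t)` is a translate of `A`, hence measurable of Lebesgue measure
`Leb(A) = 1`. So `Y_t` has characteristic function `exp (Leb(A) · C ζ) = exp (C ζ)`, that of `π`,
and a finite measure on `ℝ` is determined by its characteristic function. -/

lemma image_shift_snd_eq_preimage {α β : Type*} [AddGroup α] [AddGroup β] (A : Set (α × β))
    (t : β) : (fun p : α × β => (p.1, p.2 + t)) '' A = (· + ((0 : α), -t)) ⁻¹' A := by
  rw [show (fun p : α × β => (p.1, p.2 + t)) = (· + ((0 : α), t)) by ext <;> simp,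
    Set.image_add_right, Prod.neg_mk, neg_zero]

lemma charFun_map_eq_integral {Ω : Type*} [MeasurableSpace Ω] {P : Measure Ω} {X : Ω → ℝ}
    (hX : AEMeasurable X P) (ζ : ℝ) :
    charFun (P.map X) ζ = ∫ ω, exp (I * ζ * X ω) ∂P := by
  rw [charFun_apply_real, integral_map hX (by fun_prop)]
  simp only [mul_comm, mul_left_comm]

lemma map_eq_of_integral_cexp_eq {Ω : Type*} [MeasurableSpace Ω] {P : Measure Ω}
    [IsFiniteMeasure P] {π : Measure ℝ} [IsFiniteMeasure π] {X : Ω → ℝ}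
    (hX : AEMeasurable X P)
    (h : ∀ ζ : ℝ, ∫ ω, exp (I * ζ * X ω) ∂P = ∫ x, exp (I * ζ * x) ∂π) :
    P.map X = π :=
  Measure.ext_of_charFun <| funext fun ζ => by
    rw [charFun_map_eq_integral hX, h, charFun_apply_real]
    exact integral_congr_ae (.of_forall fun x => by ring_nf)

/-- For an infinitely divisible law `π` on `ℝ` with cumulant function `C`
(`exp(C(ζ)) = ∫ exp(iζx) dπ(x)`), a trawl `A` with `Leb(A) = 1` and a homogeneous Lévy
basis `L` with seed law `π` (i.e. `E[exp(iζL(B))] = exp(Leb(B)·C(ζ))`) yield a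
stationary trawl process `Y_t = L(A_t)` with one-dimensional marginal law `π` for
every `t`. -/
theorem stmt_9 {Ω : Type*} [MeasurableSpace Ω] (P : Measure Ω) [IsProbabilityMeasure P]
    (d : ℕ) (π : Measure ℝ) [IsProbabilityMeasure π] (C : ℝ → ℂ)
    (hC : ∀ ζ : ℝ, Complex.exp (C ζ) = ∫ x, Complex.exp (Complex.I * ζ * x) ∂π)
    (L : Set ((Fin d → ℝ) × ℝ) → Ω → ℝ)
    (hLmeas : ∀ B : Set ((Fin d → ℝ) × ℝ), Measurable (L B))
    (hL : ∀ B : Set ((Fin d → ℝ) × ℝ), MeasurableSet B → volume B < ⊤ → ∀ ζ : ℝ,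
      ∫ ω, Complex.exp (Complex.I * ζ * (L B ω)) ∂P
        = Complex.exp (((volume B).toReal : ℂ) * C ζ))
    (A : Set ((Fin d → ℝ) × ℝ)) (hA : MeasurableSet A) (hA1 : volume A = 1) (t : ℝ) :
    P.map (L ((fun p : (Fin d → ℝ) × ℝ => (p.1, p.2 + t)) '' A)) = π := by
  set B := (fun p : (Fin d → ℝ) × ℝ => (p.1, p.2 + t)) '' A
  have hB_eq : B = (· + (0, -t)) ⁻¹' A := image_shift_snd_eq_preimage A t
  have hB : MeasurableSet B := hB_eq ▸ hA.preimage (measurable_add_const _)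
  have hB1 : volume B = 1 := by
    -- translation invariance is only found as an instance for the product form of `volume`
    rw [hB_eq, Measure.volume_eq_prod, measure_preimage_add_right, ← Measure.volume_eq_prod, hA1]
  refine map_eq_of_integral_cexp_eq (hLmeas B).aemeasurable fun ζ => ?_
  rw [hL B hB (by simp [hB1]) ζ, hB1, ← hC ζ]
  simp
end
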